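/- arXiv:2012.09059 — 3 statements merged into one kernel-verified Lean document; each statement's English description precedes it below -/
import Mathlib

section
/- Let e : (0,∞) → ℝ be twice continuously differentiable with e''(v) > 0 for all v > 0. Then the total energy E(ρ, m, S, T) = ρ·e(1/ρ) + (|m|² + |S|² + T²)/(2ρ), defined for ρ > 0, m ∈ ℝ^d, S ∈ ℝ^N, T ∈ ℝ, is a strictly convex function of the conserved variables (ρ, m, S, T), i.e., its Hessian is positive definite at every point of the domain. -/
/-!
Write `E = φ(ρ) + Σᵢ ‖uᵢ‖² / (2ρ)` with `φ(ρ) = ρ e(1/ρ)` and `u = (m, S, T)`. In a direction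
`(w, ξ)` the second derivative of `φ` contributes `φ''(ρ) w² = e''(1/ρ) w² / ρ³`, and each kinetic
term, being the perspective of `‖·‖² / 2`, contributes `‖ρ ξᵢ - w uᵢ‖² / ρ³`. The first part is
positive unless `w = 0`, and then the kinetic part `Σᵢ ‖ξᵢ‖² / ρ` is positive unless `ξ = 0`.
-/

open Filter Topology Set
open scoped RealInnerProductSpace

variable {X : Type*} [NormedAddCommGroup X] [NormedSpace ℝ X]

/-- A witness for `fderiv ℝ (fun y => fderiv ℝ f y v) x v = c` which, unlike the iterated `fderiv`
itself, can be computed term by term along sums. -/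
def HasSecondDirDeriv (f : X → ℝ) (x v : X) (c : ℝ) : Prop :=
  ∃ f' : X → X →L[ℝ] ℝ, (∀ᶠ y in 𝓝 x, HasFDerivAt f (f' y) y) ∧
    ∃ D : X →L[ℝ] ℝ, HasFDerivAt (fun y => f' y v) D x ∧ D v = c

namespace HasSecondDirDeriv

variable {f g : X → ℝ} {x v : X} {a b : ℝ}

theorem fderiv_fderiv_apply (h : HasSecondDirDeriv f x v a) :
    fderiv ℝ (fun y => fderiv ℝ f y v) x v = a := by
  obtain ⟨f', hf', D, hD, rfl⟩ := h
  have : (fun y => fderiv ℝ f y v) =ᶠ[𝓝 x] fun y => f' y v := by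
    filter_upwards [hf'] with y hy
    rw [hy.fderiv]
  rw [this.fderiv_eq, hD.fderiv]

theorem add (hf : HasSecondDirDeriv f x v a) (hg : HasSecondDirDeriv g x v b) :
    HasSecondDirDeriv (f + g) x v (a + b) := by
  obtain ⟨f', hf', Df, hDf, rfl⟩ := hf
  obtain ⟨g', hg', Dg, hDg, rfl⟩ := hg
  refine ⟨f' + g', ?_, Df + Dg, hDf.add hDg, rfl⟩
  filter_upwards [hf', hg'] with y hfy hgy
  exact hfy.add hgy

end HasSecondDirDeriv

theorem hasSecondDirDeriv_comp_continuousLinearMap {φ φ' : ℝ → ℝ} {φ'' : ℝ} (p : X →L[ℝ] ℝ)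
    {x : X} (v : X) (hφ : ∀ᶠ r in 𝓝 (p x), HasDerivAt φ (φ' r) r)
    (hφ' : HasDerivAt φ' φ'' (p x)) :
    HasSecondDirDeriv (fun z => φ (p z)) x v (φ'' * p v ^ 2) := by
  refine ⟨fun y => φ' (p y) • p, ?_,
    _, (hφ'.comp_hasFDerivAt x p.hasFDerivAt).mul_const (p v), ?_⟩
  · filter_upwards [p.continuous.continuousAt.eventually hφ] with y hy
    exact hy.comp_hasFDerivAt y p.hasFDerivAt
  · simp only [smul_apply, smul_eq_mul]
    ring

section InternalEnergy

variable {e : ℝ → ℝ} {r : ℝ}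

theorem hasDerivAt_mul_comp_inv (hr : r ≠ 0) (he : DifferentiableAt ℝ e r⁻¹) :
    HasDerivAt (fun s => s * e s⁻¹) (e r⁻¹ - deriv e r⁻¹ * r⁻¹) r := by
  refine ((hasDerivAt_id r).mul (he.hasDerivAt.comp r (hasDerivAt_inv hr))).congr_deriv ?_
  simp only [id, Function.comp]
  field_simp
  ring

theorem hasDerivAt_comp_inv_sub_deriv_comp_inv_mul (hr : r ≠ 0) (he : DifferentiableAt ℝ e r⁻¹)
    (he' : DifferentiableAt ℝ (deriv e) r⁻¹) :
    HasDerivAt (fun s => e s⁻¹ - deriv e s⁻¹ * s⁻¹) (deriv (deriv e) r⁻¹ * r⁻¹ ^ 3) r := by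
  have hinv := hasDerivAt_inv hr
  refine ((he.hasDerivAt.comp r hinv).sub ((he'.hasDerivAt.comp r hinv).mul hinv)).congr_deriv ?_
  simp only [Function.comp]
  field_simp
  ring

theorem hasSecondDirDeriv_mul_comp_inv (he : ContDiffOn ℝ 2 e (Ioi 0)) (p : X →L[ℝ] ℝ) {x : X}
    (v : X) (hx : 0 < p x) :
    HasSecondDirDeriv (fun z => p z * e (p z)⁻¹) x v
      (deriv (deriv e) (p x)⁻¹ * (p x)⁻¹ ^ 3 * p v ^ 2) := by
  have hdiff : ∀ r > 0, DifferentiableAt ℝ e r⁻¹ := fun r hr =>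
    (he.contDiffAt (Ioi_mem_nhds (inv_pos.2 hr))).differentiableAt (by norm_num)
  have hdiff' : ∀ r > 0, DifferentiableAt ℝ (deriv e) r⁻¹ := fun r hr =>
    ((he.deriv_of_isOpen (m := 1) isOpen_Ioi (by norm_num)).contDiffAt
      (Ioi_mem_nhds (inv_pos.2 hr))).differentiableAt one_ne_zero
  refine hasSecondDirDeriv_comp_continuousLinearMap (φ := fun s => s * e s⁻¹) p v ?_
    (hasDerivAt_comp_inv_sub_deriv_comp_inv_mul hx.ne' (hdiff _ hx) (hdiff' _ hx))
  filter_upwards [Ioi_mem_nhds hx] with r hr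
  exact hasDerivAt_mul_comp_inv hr.ne' (hdiff r hr)

end InternalEnergy

section Kinetic

variable {F : Type*} [NormedAddCommGroup F] [InnerProductSpace ℝ F]
  (p : X →L[ℝ] ℝ) (L : X →L[ℝ] F)

theorem hasFDerivAt_norm_sq_div {y : X} (hy : p y ≠ 0) :
    HasFDerivAt (fun z => ‖L z‖ ^ 2 / (2 * p z))
      ((p y)⁻¹ • ((innerSL ℝ (L y)).comp L - (‖L y‖ ^ 2 / (2 * p y)) • p)) y := by
  have hinv := (hasDerivAt_inv hy).comp_hasFDerivAt y p.hasFDerivAt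
  have h := (L.hasFDerivAt.norm_sq.mul hinv).mul_const 2⁻¹
  refine (h.congr_of_eventuallyEq (Eventually.of_forall fun z => ?_)).congr_fderiv ?_
  · simp only [Pi.mul_apply, Function.comp_apply]
    ring
  · ext w
    simp only [smul_apply, sub_apply, add_apply, neg_apply, ContinuousLinearMap.comp_apply,
      coe_innerSL_apply, smul_eq_mul, Function.comp_apply, nsmul_eq_mul, Nat.cast_ofNat, neg_smul,
      smul_neg, smul_add]
    field_simp
    ring

theorem hasSecondDirDeriv_norm_sq_div {x : X} (v : X) (hx : p x ≠ 0) :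
    HasSecondDirDeriv (fun z => ‖L z‖ ^ 2 / (2 * p z)) x v
      (‖p x • L v - p v • L x‖ ^ 2 / p x ^ 3) := by
  have hne : ∀ᶠ y in 𝓝 x, p y ≠ 0 := p.continuous.continuousAt.eventually_ne hx
  refine ⟨_, hne.mono fun y hy => hasFDerivAt_norm_sq_div p L hy, ?_⟩
  have hinv := (hasDerivAt_inv hx).comp_hasFDerivAt x p.hasFDerivAt
  have h := ((L.hasFDerivAt.inner ℝ (hasFDerivAt_const (L v) x)).mul hinv).sub
    ((L.hasFDerivAt.norm_sq.mul (hinv.pow 2)).mul_const (p v / 2))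
  refine ⟨_, h.congr_of_eventuallyEq ?_, ?_⟩
  · filter_upwards [hne] with y hy
    simp only [smul_apply, sub_apply, ContinuousLinearMap.comp_apply, coe_innerSL_apply,
      smul_eq_mul, Function.comp_apply, inv_pow, Pi.mul_apply, Pi.sub_apply]
    field_simp
  · simp only [smul_apply, sub_apply, add_apply, neg_apply, ContinuousLinearMap.comp_apply,
      ContinuousLinearMap.prod_apply, zero_apply, coe_innerSL_apply,
      fderivInnerCLM_apply, inner_zero_right, real_inner_self_eq_norm_sq, smul_eq_mul,
      Function.comp_apply, nsmul_eq_mul, Nat.cast_ofNat, Nat.add_one_sub_one, pow_one, inv_pow,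
      neg_smul, smul_neg, smul_add, zero_add]
    rw [norm_sub_sq_real, norm_smul, norm_smul, real_inner_smul_left, real_inner_smul_right,
      real_inner_comm]
    simp only [mul_pow, Real.norm_eq_abs, sq_abs]
    field_simp
    ring

end Kinetic

theorem energy_hessian_form_pos {E F : Type*} [NormedAddCommGroup E] [NormedSpace ℝ E]
    [NormedAddCommGroup F] [NormedSpace ℝ F] {ρ a w T ξ₃ : ℝ} {m ξ₁ : E} {S ξ₂ : F}
    (hρ : 0 < ρ) (ha : 0 < a) (hξ : (w, ξ₁, ξ₂, ξ₃) ≠ 0) :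
    0 < a * ρ⁻¹ ^ 3 * w ^ 2 + (‖ρ • ξ₁ - w • m‖ ^ 2 / ρ ^ 3 + ‖ρ • ξ₂ - w • S‖ ^ 2 / ρ ^ 3 +
      (ρ • ξ₃ - w • T) ^ 2 / ρ ^ 3) := by
  rcases eq_or_ne w 0 with rfl | hw
  · have hnn : ∀ t : ℝ, 0 ≤ t ^ 2 / ρ ^ 3 := fun t => by positivity
    simp only [zero_smul, sub_zero]
    by_contra! hle
    obtain ⟨h₁, h₂, h₃⟩ : ‖ρ • ξ₁‖ ^ 2 / ρ ^ 3 = 0 ∧ ‖ρ • ξ₂‖ ^ 2 / ρ ^ 3 = 0 ∧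
        (ρ • ξ₃) ^ 2 / ρ ^ 3 = 0 := by
      refine ⟨?_, ?_, ?_⟩ <;> linarith [hnn ‖ρ • ξ₁‖, hnn ‖ρ • ξ₂‖, hnn (ρ • ξ₃)]
    simp only [div_eq_zero_iff, pow_eq_zero_iff two_ne_zero, norm_eq_zero, smul_eq_zero,
      hρ.ne', pow_eq_zero_iff three_ne_zero, false_or, or_false] at h₁ h₂ h₃
    exact hξ (by simp [h₁, h₂, h₃])
  · positivity

/-- The total energy `E(ρ,m,S,T) = ρ e(1/ρ) + (|m|² + |S|² + T²)/(2ρ)` is strictly convex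
in the conserved variables: its Hessian quadratic form is positive definite at every point
of the domain `{ρ > 0} × ℝ^d × ℝ^N × ℝ`. -/
theorem total_energy_strictly_convex (d N : ℕ) (e : ℝ → ℝ)
    (he : ContDiffOn ℝ 2 e (Set.Ioi 0)) (he'' : ∀ v > (0:ℝ), 0 < deriv (deriv e) v) :
    ∀ x : ℝ × EuclideanSpace ℝ (Fin d) × EuclideanSpace ℝ (Fin N) × ℝ, 0 < x.1 →
      ∀ v : ℝ × EuclideanSpace ℝ (Fin d) × EuclideanSpace ℝ (Fin N) × ℝ, v ≠ 0 →
        0 < fderiv ℝ (fun y : ℝ × EuclideanSpace ℝ (Fin d) × EuclideanSpace ℝ (Fin N) × ℝ =>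
              fderiv ℝ (fun z : ℝ × EuclideanSpace ℝ (Fin d) × EuclideanSpace ℝ (Fin N) × ℝ =>
                  z.1 * e (1 / z.1) +
                    (‖z.2.1‖ ^ 2 + ‖z.2.2.1‖ ^ 2 + z.2.2.2 ^ 2) / (2 * z.1)) y v) x v := by
  intro x hx v hv
  open ContinuousLinearMap in
  have h := (hasSecondDirDeriv_mul_comp_inv he (fst ℝ ℝ _) v hx).add
    (((hasSecondDirDeriv_norm_sq_div (fst ℝ ℝ _) ((fst ℝ _ _).comp (snd ℝ ℝ _)) v hx.ne').add
      (hasSecondDirDeriv_norm_sq_div (fst ℝ ℝ _)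
        ((fst ℝ _ _).comp ((snd ℝ _ _).comp (snd ℝ ℝ _))) v hx.ne')).add
      (hasSecondDirDeriv_norm_sq_div (fst ℝ ℝ _)
        ((snd ℝ _ _).comp ((snd ℝ _ _).comp (snd ℝ ℝ _))) v hx.ne'))
  simp only [coe_fst', coe_comp, Function.comp_apply, coe_snd', Pi.add_def, Real.norm_eq_abs,
    sq_abs] at h
  simp only [one_div, add_div]
  rw [h.fderiv_fderiv_apply]
  exact energy_hessian_form_pos hx (he'' _ (inv_pos.2 hx)) hv
end

section
/- Let U ⊆ ℝ^n be open and convex, and let E : U × ℝ → ℝ be a convex function of (q, η) that is continuously differentiable and strictly increasing in η (∂E/∂η > 0 everywhere). Suppose that for each q the map η ↦ E(q, η) is a bijection onto an interval, and define η = h(q, Ê) implicitly by E(q, h(q, Ê)) = Ê. Then the function (q, Ê) ↦ −h(q, Ê) is convex on its (convex) domain. -/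
/-!
If `E (qᵢ, ηᵢ) = Êᵢ`, joint convexity gives `E (q̄, η̄) ≤ Ê̄` for the convex combinations, and since
`E` is increasing in `η` this says `η̄ ≤ h (q̄, Ê̄)`, i.e. `-h` is convex. The combination `Ê̄` lies in
the range of `E (q̄, ·)` because that range is an interval which is unbounded above: a convex,
strictly increasing function grows at least linearly.
-/

open Set

theorem ConvexOn.comp_prodMk {𝕜 F G β : Type*} [Field 𝕜] [LinearOrder 𝕜] [AddCommGroup F]
    [Module 𝕜 F] [AddCommGroup G] [Module 𝕜 G] [AddCommMonoid β] [PartialOrder β] [SMul 𝕜 β]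
    {s : Set F} {t : Set G} {E : F × G → β} (hE : ConvexOn 𝕜 (s ×ˢ t) E) {q : F} (hq : q ∈ s) :
    ConvexOn 𝕜 t fun x => E (q, x) := by
  have hsection := hE.comp_affineMap ((AffineMap.const 𝕜 G q).prod (AffineMap.id 𝕜 G))
  simpa [AffineMap.coe_prod, Function.prod_def, Function.comp_def, hq] using hsection

section
variable {𝕜 F : Type*} [Field 𝕜] [LinearOrder 𝕜]

theorem ConvexOn.exists_le_apply [IsStrictOrderedRing 𝕜] {f : 𝕜 → 𝕜} (hf : ConvexOn 𝕜 univ f)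
    {x y : 𝕜} (hxy : x < y) (hfxy : f x < f y) (c : 𝕜) : ∃ t, c ≤ f t := by
  set k := max 1 ((c - f y) / (f y - f x))
  have hk : 0 < k := lt_of_lt_of_le one_pos (le_max_left _ _)
  refine ⟨y + (y - x) * k, ?_⟩
  have hslope := hf.slope_mono_adjacent (mem_univ x) (mem_univ (y + (y - x) * k)) hxy
    (by nlinarith [sub_pos.2 hxy])
  rw [add_sub_cancel_left, div_le_div_iff₀ (sub_pos.2 hxy) (by positivity)] at hslope
  have hgrowth : (f y - f x) * k ≤ f (y + (y - x) * k) - f y :=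
    le_of_mul_le_mul_right (by linarith) (sub_pos.2 hxy)
  have hc : c - f y ≤ k * (f y - f x) := (div_le_iff₀ (sub_pos.2 hfxy)).1 (le_max_right _ _)
  linarith

theorem StrictMono.Ici_subset_range_of_convexOn [IsStrictOrderedRing 𝕜] {f : 𝕜 → 𝕜}
    (hmono : StrictMono f) (hf : ConvexOn 𝕜 univ f) (hrange : (range f).OrdConnected) (x : 𝕜) :
    Ici (f x) ⊆ range f := by
  intro e he
  obtain ⟨t, ht⟩ := hf.exists_le_apply (lt_add_one x) (hmono (lt_add_one x)) e
  exact hrange.out (mem_range_self x) (mem_range_self t) ⟨he, ht⟩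

variable [AddCommGroup F] [Module 𝕜 F] {s : Set F} {E h : F × 𝕜 → 𝕜}

theorem ConvexOn.apply_partialInv_combo_le (hE : ConvexOn 𝕜 (s ×ˢ univ) E)
    (hinv : ∀ p : F × 𝕜, p.1 ∈ s → p.2 ∈ range (fun t => E (p.1, t)) → E (p.1, h p) = p.2)
    {p₁ p₂ : F × 𝕜} (hp₁ : p₁.1 ∈ s ∧ p₁.2 ∈ range fun t => E (p₁.1, t))
    (hp₂ : p₂.1 ∈ s ∧ p₂.2 ∈ range fun t => E (p₂.1, t)) {a b : 𝕜} (ha : 0 ≤ a) (hb : 0 ≤ b)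
    (hab : a + b = 1) :
    E ((a • p₁ + b • p₂).1, a * h p₁ + b * h p₂) ≤ (a • p₁ + b • p₂).2 := by
  have hcombo := hE.2 (x := (p₁.1, h p₁)) (y := (p₂.1, h p₂)) ⟨hp₁.1, trivial⟩ ⟨hp₂.1, trivial⟩
    ha hb hab
  rwa [hinv p₁ hp₁.1 hp₁.2, hinv p₂ hp₂.1 hp₂.2] at hcombo

theorem ConvexOn.convexOn_neg_partialInv [IsStrictOrderedRing 𝕜] (hs : Convex 𝕜 s)
    (hE : ConvexOn 𝕜 (s ×ˢ univ) E)
    (hmono : ∀ q ∈ s, StrictMono fun t => E (q, t))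
    (hrange : ∀ q ∈ s, (range fun t => E (q, t)).OrdConnected)
    (hinv : ∀ p : F × 𝕜, p.1 ∈ s → p.2 ∈ range (fun t => E (p.1, t)) → E (p.1, h p) = p.2) :
    ConvexOn 𝕜 {p | p.1 ∈ s ∧ p.2 ∈ range fun t => E (p.1, t)} fun p => -h p := by
  have hdom : Convex 𝕜 {p : F × 𝕜 | p.1 ∈ s ∧ p.2 ∈ range fun t => E (p.1, t)} := by
    intro p₁ hp₁ p₂ hp₂ a b ha hb hab
    have hq : (a • p₁ + b • p₂).1 ∈ s := hs hp₁.1 hp₂.1 ha hb hab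
    exact ⟨hq, (hmono _ hq).Ici_subset_range_of_convexOn (hE.comp_prodMk hq) (hrange _ hq) _
      (hE.apply_partialInv_combo_le hinv hp₁ hp₂ ha hb hab)⟩
  refine ⟨hdom, fun p₁ hp₁ p₂ hp₂ a b ha hb hab => ?_⟩
  obtain ⟨hq, hp⟩ := hdom hp₁ hp₂ ha hb hab
  have hle : a * h p₁ + b * h p₂ ≤ h (a • p₁ + b • p₂) := by
    rw [← (hmono _ hq).le_iff_le, hinv _ hq hp]
    exact hE.apply_partialInv_combo_le hinv hp₁ hp₂ ha hb hab
  simp only [smul_eq_mul]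
  linarith

end

theorem neg_partial_inverse_convex_general (n : ℕ) (U : Set (Fin n → ℝ))
    (hUconv : Convex ℝ U)
    (E : (Fin n → ℝ) × ℝ → ℝ)
    (hconv : ConvexOn ℝ (U ×ˢ (Set.univ : Set ℝ)) E)
    (hmono : ∀ q ∈ U, ∀ η : ℝ, 0 < deriv (fun t => E (q, t)) η)
    (hbij : ∀ q ∈ U, Function.Injective (fun η : ℝ => E (q, η)) ∧
      (Set.range fun η : ℝ => E (q, η)).OrdConnected)
    (h : (Fin n → ℝ) × ℝ → ℝ)
    (hinv : ∀ p : (Fin n → ℝ) × ℝ, p.1 ∈ U → p.2 ∈ (Set.range fun η : ℝ => E (p.1, η)) →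
      E (p.1, h p) = p.2) :
    ConvexOn ℝ {p : (Fin n → ℝ) × ℝ | p.1 ∈ U ∧ p.2 ∈ Set.range fun η : ℝ => E (p.1, η)}
      (fun p => -h p) :=
  hconv.convexOn_neg_partialInv hUconv (fun q hq => strictMono_of_deriv_pos (hmono q hq))
    (fun q hq => (hbij q hq).2) hinv

/-- Inverting a jointly convex function, continuously differentiable and strictly increasing in
its last variable (with interval range in that variable), yields that `−h` is convex, where
`h(q, Ê)` is defined implicitly by `E(q, h(q, Ê)) = Ê`. -/
theorem neg_partial_inverse_convex (n : ℕ) (U : Set (Fin n → ℝ))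
    (hUopen : IsOpen U) (hUconv : Convex ℝ U)
    (E : (Fin n → ℝ) × ℝ → ℝ)
    (hconv : ConvexOn ℝ (U ×ˢ (Set.univ : Set ℝ)) E)
    (hC1 : ContDiffOn ℝ 1 E (U ×ˢ (Set.univ : Set ℝ)))
    (hmono : ∀ q ∈ U, ∀ η : ℝ, 0 < deriv (fun t => E (q, t)) η)
    (hbij : ∀ q ∈ U, Function.Injective (fun η : ℝ => E (q, η)) ∧
      (Set.range fun η : ℝ => E (q, η)).OrdConnected)
    (h : (Fin n → ℝ) × ℝ → ℝ)
    (hinv : ∀ p : (Fin n → ℝ) × ℝ, p.1 ∈ U → p.2 ∈ (Set.range fun η : ℝ => E (p.1, η)) →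
      E (p.1, h p) = p.2) :
    ConvexOn ℝ {p : (Fin n → ℝ) × ℝ | p.1 ∈ U ∧ p.2 ∈ Set.range fun η : ℝ => E (p.1, η)}
      (fun p => -h p) :=
  neg_partial_inverse_convex_general n U hUconv E hconv hmono hbij h hinv
end

section
/- Let e : (0,∞) → ℝ be C² with e'' > 0, p = −e', and let (ρ, u, σ, τ) be a C¹ solution on an open set of ℝ × ℝ^d of the system ρ_t + (ρu^j)_{,j} = 0; (ρu^i)_t + (ρu^ju^i + pδ^{ij})_{,j} + (1/ε)(σ^{ij} + τδ^{ij})_{,j} = 0; ρ(σ^{kl}_t + u^jσ^{kl}_{,j}) + (1/ε)c^{klj}_i u^i_{,j} = −σ^{kl}/(με²); ρ(τ_t + u^jτ_{,j}) + (1/ε)u^j_{,j} = −τ/(νε²), with ρ > 0, σ symmetric and trace-free, and ε, μ, ν > 0. Define E = ρ(e(1/ρ) + |u|²/2 + |σ|²/2 + τ²/2) and F^j = (E + p)u^j + (1/ε)(σ^{ij} + τδ^{ij})u_i. Then E_t + F^j_{,j} = −|σ|²/(με²) − τ²/(νε²); in particular E_t + F^j_{,j} ≤ 0. -/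
set_option maxHeartbeats 2000000


open scoped BigOperators

/-- Kronecker delta on `Fin 3`. -/
noncomputable def kdelta (a b : Fin 3) : ℝ := if a = b then 1 else 0

/-- The tensor `c_i^{klj} = (1/2)(δ_i^k δ^{lj} + δ_i^l δ^{kj}) − (1/3) δ_i^j δ^{kl}`. -/
noncomputable def cTensor (i k l j : Fin 3) : ℝ :=
  (1/2) * (kdelta i k * kdelta l j + kdelta i l * kdelta k j) - (1/3) * kdelta i j * kdelta k l

/-- Time derivative `∂_t f` of a function of `(t, x) ∈ ℝ × ℝ³`. -/
noncomputable def pt (f : ℝ × (Fin 3 → ℝ) → ℝ) (z : ℝ × (Fin 3 → ℝ)) : ℝ :=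
  deriv (fun s => f (s, z.2)) z.1

/-- Spatial partial derivative `∂_j f`. -/
noncomputable def pd (j : Fin 3) (f : ℝ × (Fin 3 → ℝ) → ℝ) (z : ℝ × (Fin 3 → ℝ)) : ℝ :=
  deriv (fun s => f (z.1, Function.update z.2 j s)) (z.2 j)

private lemma hasDerivAt_slice_fst (f : ℝ × (Fin 3 → ℝ) → ℝ) (hf : ContDiff ℝ (⊤ : ℕ∞) f)
    (z : ℝ × (Fin 3 → ℝ)) : HasDerivAt (fun s => f (s, z.2)) (pt f z) z.1 := by
  have h : DifferentiableAt ℝ (fun s => f (s, z.2)) z.1 :=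
    ((hf.differentiable (by simp)).comp
      (differentiable_id.prodMk (differentiable_const _))) z.1
  exact h.hasDerivAt

private lemma hasDerivAt_slice_upd (f : ℝ × (Fin 3 → ℝ) → ℝ) (hf : ContDiff ℝ (⊤ : ℕ∞) f)
    (z : ℝ × (Fin 3 → ℝ)) (j : Fin 3) :
    HasDerivAt (fun s => f (z.1, Function.update z.2 j s)) (pd j f z) (z.2 j) := by
  have hupd : Differentiable ℝ (fun s : ℝ => Function.update z.2 j s) :=
    (contDiff_update ⊤ z.2 j).differentiable (by simp)
  have h : DifferentiableAt ℝ (fun s => f (z.1, Function.update z.2 j s)) (z.2 j) :=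
    ((hf.differentiable (by simp)).comp
      ((differentiable_const _).prodMk hupd)) (z.2 j)
  exact h.hasDerivAt

/-- Energy dissipation identity for the Galilei-invariant version of Yong's model:
along C¹ solutions, `E_t + F^j_{,j} = −|σ|²/(με²) − τ²/(νε²) ≤ 0`. -/
theorem energy_dissipation_identity
    (e : ℝ → ℝ) (he : ContDiffOn ℝ 2 e (Set.Ioi 0))
    (he'' : ∀ v > (0:ℝ), 0 < deriv (deriv e) v)
    (ε μ ν : ℝ) (hε : 0 < ε) (hμ : 0 < μ) (hν : 0 < ν)
    (ρ : ℝ × (Fin 3 → ℝ) → ℝ) (u : ℝ × (Fin 3 → ℝ) → Fin 3 → ℝ)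
    (σ : ℝ × (Fin 3 → ℝ) → Fin 3 → Fin 3 → ℝ) (τ : ℝ × (Fin 3 → ℝ) → ℝ)
    (hρ : ContDiff ℝ (⊤ : ℕ∞) ρ) (hu : ContDiff ℝ (⊤ : ℕ∞) u) (hσ : ContDiff ℝ (⊤ : ℕ∞) σ)
    (hτ : ContDiff ℝ (⊤ : ℕ∞) τ)
    (hρpos : ∀ z, 0 < ρ z)
    (hσsymm : ∀ z k l, σ z k l = σ z l k) (hσtr : ∀ z, ∑ k, σ z k k = 0)
    (pfun : ℝ → ℝ) (hpfun : ∀ v > (0:ℝ), pfun v = -deriv e v)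
    -- mass conservation
    (heq1 : ∀ z, pt ρ z + ∑ j, pd j (fun w => ρ w * u w j) z = 0)
    -- momentum balance
    (heq2 : ∀ z, ∀ i, pt (fun w => ρ w * u w i) z
      + ∑ j, pd j (fun w => ρ w * u w j * u w i + pfun (1 / ρ w) * kdelta i j) z
      + (1/ε) * ∑ j, pd j (fun w => σ w i j + τ w * kdelta i j) z = 0)
    -- stress relaxation
    (heq3 : ∀ z, ∀ k l, ρ z * (pt (fun w => σ w k l) z + ∑ j, u z j * pd j (fun w => σ w k l) z)
      + (1/ε) * ∑ i, ∑ j, cTensor i k l j * pd j (fun w => u w i) z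
      = -σ z k l / (μ * ε ^ 2))
    -- bulk relaxation
    (heq4 : ∀ z, ρ z * (pt τ z + ∑ j, u z j * pd j τ z)
      + (1/ε) * ∑ j, pd j (fun w => u w j) z = -τ z / (ν * ε ^ 2)) :
    ∀ z,
      (pt (fun w => ρ w * (e (1 / ρ w) + (∑ i, u w i ^ 2) / 2
            + (∑ k, ∑ l, σ w k l ^ 2) / 2 + τ w ^ 2 / 2)) z
        + ∑ j, pd j (fun w =>
            (ρ w * (e (1 / ρ w) + (∑ i, u w i ^ 2) / 2
                + (∑ k, ∑ l, σ w k l ^ 2) / 2 + τ w ^ 2 / 2) + pfun (1 / ρ w)) * u w j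
            + (1/ε) * ∑ i, (σ w i j + τ w * kdelta i j) * u w i) z
        = -(∑ k, ∑ l, σ z k l ^ 2) / (μ * ε ^ 2) - τ z ^ 2 / (ν * ε ^ 2)) ∧
      (pt (fun w => ρ w * (e (1 / ρ w) + (∑ i, u w i ^ 2) / 2
            + (∑ k, ∑ l, σ w k l ^ 2) / 2 + τ w ^ 2 / 2)) z
        + ∑ j, pd j (fun w =>
            (ρ w * (e (1 / ρ w) + (∑ i, u w i ^ 2) / 2
                + (∑ k, ∑ l, σ w k l ^ 2) / 2 + τ w ^ 2 / 2) + pfun (1 / ρ w)) * u w j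
            + (1/ε) * ∑ i, (σ w i j + τ w * kdelta i j) * u w i) z ≤ 0) := by
  intro z
  have hr0 : (0:ℝ) < ρ z := hρpos z
  have hrne : ρ z ≠ 0 := ne_of_gt hr0
  have hpe' : ∀ w : ℝ × (Fin 3 → ℝ), pfun (1 / ρ w) = -deriv e (1 / ρ w) := fun w =>
    hpfun _ (by have := hρpos w; positivity)
  have hediff : DifferentiableAt ℝ e (ρ z)⁻¹ :=
    (he.differentiableOn (by norm_num)).differentiableAt
      (isOpen_Ioi.mem_nhds (Set.mem_Ioi.mpr (by positivity)))
  have hdediff : DifferentiableAt ℝ (deriv e) (ρ z)⁻¹ :=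
    ((he.deriv_of_isOpen isOpen_Ioi (by norm_num)).differentiableOn one_ne_zero).differentiableAt
      (isOpen_Ioi.mem_nhds (Set.mem_Ioi.mpr (by positivity)))
  have hui : ∀ i, ContDiff ℝ (⊤ : ℕ∞) fun w => u w i := fun i => (contDiff_pi.1 hu) i
  have hσi : ∀ k l, ContDiff ℝ (⊤ : ℕ∞) fun w => σ w k l := fun k l =>
    (contDiff_pi.1 ((contDiff_pi.1 hσ) k)) l
  -- atomic derivative facts, time direction
  have At_ρ : HasDerivAt (fun s => ρ (s, z.2)) (pt ρ z) z.1 := hasDerivAt_slice_fst ρ hρ z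
  have At_u : ∀ i, HasDerivAt (fun s => u (s, z.2) i) (pt (fun w => u w i) z) z.1 :=
    fun i => hasDerivAt_slice_fst _ (hui i) z
  have At_σ : ∀ k l, HasDerivAt (fun s => σ (s, z.2) k l) (pt (fun w => σ w k l) z) z.1 :=
    fun k l => hasDerivAt_slice_fst _ (hσi k l) z
  have At_τ : HasDerivAt (fun s => τ (s, z.2)) (pt τ z) z.1 := hasDerivAt_slice_fst τ hτ z
  have At_e : HasDerivAt (fun s => e (ρ (s, z.2))⁻¹) (pt (fun w => e (ρ w)⁻¹) z) z.1 := by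
    have h1 : DifferentiableAt ℝ (fun s => (ρ (s, z.2))⁻¹) z.1 :=
      At_ρ.differentiableAt.inv hrne
    exact (hediff.comp z.1 h1).hasDerivAt
  -- atomic derivative facts, space directions
  have Ad_ρ : ∀ j, HasDerivAt (fun s => ρ (z.1, Function.update z.2 j s)) (pd j ρ z) (z.2 j) :=
    fun j => hasDerivAt_slice_upd ρ hρ z j
  have Ad_u : ∀ i j, HasDerivAt (fun s => u (z.1, Function.update z.2 j s) i)
      (pd j (fun w => u w i) z) (z.2 j) := fun i j => hasDerivAt_slice_upd _ (hui i) z j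
  have Ad_σ : ∀ k l j, HasDerivAt (fun s => σ (z.1, Function.update z.2 j s) k l)
      (pd j (fun w => σ w k l) z) (z.2 j) := fun k l j => hasDerivAt_slice_upd _ (hσi k l) z j
  have Ad_τ : ∀ j, HasDerivAt (fun s => τ (z.1, Function.update z.2 j s)) (pd j τ z) (z.2 j) :=
    fun j => hasDerivAt_slice_upd τ hτ z j
  have hrne' : ∀ j, ρ (z.1, Function.update z.2 j (z.2 j)) ≠ 0 := fun j => by
    rw [Function.update_eq_self]; exact hrne
  have Ad_e : ∀ j, HasDerivAt (fun s => e (ρ (z.1, Function.update z.2 j s))⁻¹)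
      (pd j (fun w => e (ρ w)⁻¹) z) (z.2 j) := by
    intro j
    have h1 : DifferentiableAt ℝ (fun s => (ρ (z.1, Function.update z.2 j s))⁻¹) (z.2 j) :=
      (Ad_ρ j).differentiableAt.inv (hrne' j)
    have h2 : DifferentiableAt ℝ e (ρ (z.1, Function.update z.2 j (z.2 j)))⁻¹ := by
      rw [Function.update_eq_self]; exact hediff
    exact (h2.comp (z.2 j) h1).hasDerivAt
  have Ad_de : ∀ j, HasDerivAt (fun s => deriv e (ρ (z.1, Function.update z.2 j s))⁻¹)
      (pd j (fun w => deriv e (ρ w)⁻¹) z) (z.2 j) := by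
    intro j
    have h1 : DifferentiableAt ℝ (fun s => (ρ (z.1, Function.update z.2 j s))⁻¹) (z.2 j) :=
      (Ad_ρ j).differentiableAt.inv (hrne' j)
    have h2 : DifferentiableAt ℝ (deriv e) (ρ (z.1, Function.update z.2 j (z.2 j)))⁻¹ := by
      rw [Function.update_eq_self]; exact hdediff
    exact (h2.comp (z.2 j) h1).hasDerivAt
  -- chain rule relations for the internal energy composite
  have hct : pt (fun w => e (ρ w)⁻¹) z * ρ z ^ 2 = -(deriv e (ρ z)⁻¹ * pt ρ z) := by
    have h1 : HasDerivAt (fun s => (ρ (s, z.2))⁻¹) (-(pt ρ z) / ρ z ^ 2) z.1 :=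
      At_ρ.inv hrne
    have h2 := HasDerivAt.comp z.1 hediff.hasDerivAt h1
    have h3 : pt (fun w => e (ρ w)⁻¹) z = deriv e (ρ z)⁻¹ * (-(pt ρ z) / ρ z ^ 2) := h2.deriv
    rw [h3]; field_simp
  have hcd : ∀ j, pd j (fun w => e (ρ w)⁻¹) z * ρ z ^ 2 = -(deriv e (ρ z)⁻¹ * pd j ρ z) := by
    intro j
    have h1 := (Ad_ρ j).inv (hrne' j)
    simp only [Function.update_eq_self, Prod.mk.eta] at h1
    have h2' : HasDerivAt e (deriv e (ρ z)⁻¹) (ρ (z.1, Function.update z.2 j (z.2 j)))⁻¹ := by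
      rw [Function.update_eq_self]; exact hediff.hasDerivAt
    have h2 := HasDerivAt.comp (z.2 j) h2' h1
    have h3 : pd j (fun w => e (ρ w)⁻¹) z
        = deriv e (ρ z)⁻¹ * (-(pd j ρ z) / ρ z ^ 2) := h2.deriv
    rw [h3]; field_simp
  have hc0 := hcd 0
  have hc1 := hcd 1
  have hc2 := hcd 2
  simp only [Fin.sum_univ_three, hpe']
  norm_num [kdelta, Fin.ext_iff]
  have pair : ∀ (A B : ℝ), A = B → B ≤ 0 → A = B ∧ A ≤ 0 := fun A B h hb => ⟨h, h.trans_le hb⟩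
  refine pair _ _ ?_ ?_
  on_goal 2 =>
    have e1 : (0:ℝ) < μ * ε ^ 2 := by positivity
    have e2 : (0:ℝ) < ν * ε ^ 2 := by positivity
    have h9 : (-σ z 2 2 ^ 2 + (-σ z 2 1 ^ 2 + -σ z 2 0 ^ 2) +
        (-σ z 1 2 ^ 2 + (-σ z 1 1 ^ 2 + -σ z 1 0 ^ 2) +
          (-σ z 0 2 ^ 2 + (-σ z 0 1 ^ 2 + -σ z 0 0 ^ 2)))) ≤ 0 := by
      nlinarith [sq_nonneg (σ z 0 0), sq_nonneg (σ z 0 1), sq_nonneg (σ z 0 2),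
        sq_nonneg (σ z 1 0), sq_nonneg (σ z 1 1), sq_nonneg (σ z 1 2),
        sq_nonneg (σ z 2 0), sq_nonneg (σ z 2 1), sq_nonneg (σ z 2 2)]
    have t1 : (-σ z 2 2 ^ 2 + (-σ z 2 1 ^ 2 + -σ z 2 0 ^ 2) +
        (-σ z 1 2 ^ 2 + (-σ z 1 1 ^ 2 + -σ z 1 0 ^ 2) +
          (-σ z 0 2 ^ 2 + (-σ z 0 1 ^ 2 + -σ z 0 0 ^ 2)))) / (μ * ε ^ 2) ≤ 0 :=
      div_nonpos_of_nonpos_of_nonneg h9 e1.le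
    have t2 : (0:ℝ) ≤ τ z ^ 2 / (ν * ε ^ 2) := by positivity
    linarith
  -- composite derivative expansions (time)
  have KU_t := ((((At_u 0).fun_pow 2).fun_add ((At_u 1).fun_pow 2)).fun_add ((At_u 2).fun_pow 2)).div_const 2
  have KS_t := ((((((At_σ 0 0).fun_pow 2).fun_add ((At_σ 0 1).fun_pow 2)).fun_add ((At_σ 0 2).fun_pow 2)).fun_add
      ((((At_σ 1 0).fun_pow 2).fun_add ((At_σ 1 1).fun_pow 2)).fun_add ((At_σ 1 2).fun_pow 2))).fun_add
      ((((At_σ 2 0).fun_pow 2).fun_add ((At_σ 2 1).fun_pow 2)).fun_add ((At_σ 2 2).fun_pow 2))).div_const 2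
  have Hη_t := ((At_e.fun_add KU_t).fun_add KS_t).fun_add ((At_τ.fun_pow 2).div_const 2)
  have HEt := (At_ρ.fun_mul Hη_t).deriv
  -- composite derivative expansions (space)
  have KU_d := fun j => ((((Ad_u 0 j).fun_pow 2).fun_add ((Ad_u 1 j).fun_pow 2)).fun_add ((Ad_u 2 j).fun_pow 2)).div_const 2
  have KS_d := fun j => ((((((Ad_σ 0 0 j).fun_pow 2).fun_add ((Ad_σ 0 1 j).fun_pow 2)).fun_add ((Ad_σ 0 2 j).fun_pow 2)).fun_add
      ((((Ad_σ 1 0 j).fun_pow 2).fun_add ((Ad_σ 1 1 j).fun_pow 2)).fun_add ((Ad_σ 1 2 j).fun_pow 2))).fun_add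
      ((((Ad_σ 2 0 j).fun_pow 2).fun_add ((Ad_σ 2 1 j).fun_pow 2)).fun_add ((Ad_σ 2 2 j).fun_pow 2))).div_const 2
  have Hη_d := fun j => (((Ad_e j).fun_add (KU_d j)).fun_add (KS_d j)).fun_add (((Ad_τ j).fun_pow 2).div_const 2)
  have Hfirst := fun j => ((Ad_ρ j).fun_mul (Hη_d j)).fun_add ((Ad_de j).fun_neg)
  have HF0 := (((Hfirst 0).fun_mul (Ad_u 0 0)).fun_add
      ((((((Ad_σ 0 0 0).fun_add (Ad_τ 0)).fun_mul (Ad_u 0 0)).fun_add ((Ad_σ 1 0 0).fun_mul (Ad_u 1 0))).fun_add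
        ((Ad_σ 2 0 0).fun_mul (Ad_u 2 0))).const_mul ε⁻¹)).deriv
  have HF1 := (((Hfirst 1).fun_mul (Ad_u 1 1)).fun_add
      (((((Ad_σ 0 1 1).fun_mul (Ad_u 0 1)).fun_add (((Ad_σ 1 1 1).fun_add (Ad_τ 1)).fun_mul (Ad_u 1 1))).fun_add
        ((Ad_σ 2 1 1).fun_mul (Ad_u 2 1))).const_mul ε⁻¹)).deriv
  have HF2 := (((Hfirst 2).fun_mul (Ad_u 2 2)).fun_add
      (((((Ad_σ 0 2 2).fun_mul (Ad_u 0 2)).fun_add ((Ad_σ 1 2 2).fun_mul (Ad_u 1 2))).fun_add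
        (((Ad_σ 2 2 2).fun_add (Ad_τ 2)).fun_mul (Ad_u 2 2))).const_mul ε⁻¹)).deriv
  have P10 := ((Ad_ρ 0).fun_mul (Ad_u 0 0)).deriv
  have P11 := ((Ad_ρ 1).fun_mul (Ad_u 1 1)).deriv
  have P12 := ((Ad_ρ 2).fun_mul (Ad_u 2 2)).deriv
  have PT0 := (At_ρ.fun_mul (At_u 0)).deriv
  have PT1 := (At_ρ.fun_mul (At_u 1)).deriv
  have PT2 := (At_ρ.fun_mul (At_u 2)).deriv
  have PM00 := ((((Ad_ρ 0).fun_mul (Ad_u 0 0)).fun_mul (Ad_u 0 0)).fun_add ((Ad_de 0).fun_neg)).deriv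
  have PM01 := (((Ad_ρ 1).fun_mul (Ad_u 1 1)).fun_mul (Ad_u 0 1)).deriv
  have PM02 := (((Ad_ρ 2).fun_mul (Ad_u 2 2)).fun_mul (Ad_u 0 2)).deriv
  have PM10 := (((Ad_ρ 0).fun_mul (Ad_u 0 0)).fun_mul (Ad_u 1 0)).deriv
  have PM11 := ((((Ad_ρ 1).fun_mul (Ad_u 1 1)).fun_mul (Ad_u 1 1)).fun_add ((Ad_de 1).fun_neg)).deriv
  have PM12 := (((Ad_ρ 2).fun_mul (Ad_u 2 2)).fun_mul (Ad_u 1 2)).deriv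
  have PM20 := (((Ad_ρ 0).fun_mul (Ad_u 0 0)).fun_mul (Ad_u 2 0)).deriv
  have PM21 := (((Ad_ρ 1).fun_mul (Ad_u 1 1)).fun_mul (Ad_u 2 1)).deriv
  have PM22 := ((((Ad_ρ 2).fun_mul (Ad_u 2 2)).fun_mul (Ad_u 2 2)).fun_add ((Ad_de 2).fun_neg)).deriv
  have PS0 := ((Ad_σ 0 0 0).fun_add (Ad_τ 0)).deriv
  have PS1 := ((Ad_σ 1 1 1).fun_add (Ad_τ 1)).deriv
  have PS2 := ((Ad_σ 2 2 2).fun_add (Ad_τ 2)).deriv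
  simp only [Function.update_eq_self, Prod.mk.eta] at HEt HF0 HF1 HF2 P10 P11 P12 PT0 PT1 PT2 PM00 PM01 PM02 PM10 PM11 PM12 PM20 PM21 PM22
  -- hypotheses at z
  have h1 := heq1 z
  have h20 := heq2 z 0
  have h21 := heq2 z 1
  have h22 := heq2 z 2
  have h300 := heq3 z 0 0
  have h301 := heq3 z 0 1
  have h302 := heq3 z 0 2
  have h310 := heq3 z 1 0
  have h311 := heq3 z 1 1
  have h312 := heq3 z 1 2
  have h320 := heq3 z 2 0
  have h321 := heq3 z 2 1
  have h322 := heq3 z 2 2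
  have h4 := heq4 z
  simp only [Fin.sum_univ_three, hpe'] at h1 h20 h21 h22 h300 h301 h302 h310 h311 h312 h320 h321 h322 h4
  norm_num [kdelta, cTensor, Fin.ext_iff] at h1 h20 h21 h22 h300 h301 h302 h310 h311 h312 h320 h321 h322 h4
  -- symmetry and trace value relations
  have hv10 : σ z 1 0 = σ z 0 1 := hσsymm z 1 0
  have hv20 : σ z 2 0 = σ z 0 2 := hσsymm z 2 0
  have hv21 : σ z 2 1 = σ z 1 2 := hσsymm z 2 1
  have hv22 : σ z 2 2 = -σ z 0 0 - σ z 1 1 := by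
    have h := hσtr z; simp only [Fin.sum_univ_three] at h; linarith
  rw [hv10, hv20, hv21, hv22] at HEt HF0 HF1 HF2 ⊢
  rw [hv10] at h310
  rw [hv20] at h320
  rw [hv21] at h321
  rw [hv22] at h322
  simp only [pt, pd] at HEt HF0 HF1 HF2 P10 P11 P12 PT0 PT1 PT2 PM00 PM01 PM02 PM10 PM11 PM12 PM20 PM21 PM22 PS0 PS1 PS2 h1 h20 h21 h22 h300 h301 h302 h310 h311 h312 h320 h321 h322 h4 hct hc0 hc1 hc2 ⊢
  refine mul_left_cancel₀ hrne ?_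
  linear_combination
    (ρ z * (e (ρ z)⁻¹ + (u z 0 ^ 2 + u z 1 ^ 2 + u z 2 ^ 2) / 2
        + (σ z 0 0 ^ 2 + σ z 0 1 ^ 2 + σ z 0 2 ^ 2 + σ z 0 1 ^ 2 + σ z 1 1 ^ 2 + σ z 1 2 ^ 2
          + σ z 0 2 ^ 2 + σ z 1 2 ^ 2 + (-σ z 0 0 - σ z 1 1) ^ 2) / 2 + τ z ^ 2 / 2)
      - deriv e (ρ z)⁻¹ - ρ z * (u z 0 ^ 2 + u z 1 ^ 2 + u z 2 ^ 2)) * (h1 - P10 - P11 - P12)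
    + ρ z * u z 0 * (h20 - PT0 - PM00 - PM01 - PM02) - ρ z * u z 0 / ε * PS0
    + ρ z * u z 1 * (h21 - PT1 - PM10 - PM11 - PM12) - ρ z * u z 1 / ε * PS1
    + ρ z * u z 2 * (h22 - PT2 - PM20 - PM21 - PM22) - ρ z * u z 2 / ε * PS2
    + ρ z * σ z 0 0 * h300 + ρ z * σ z 0 1 * h301 + ρ z * σ z 0 2 * h302
    + ρ z * σ z 0 1 * h310 + ρ z * σ z 1 1 * h311 + ρ z * σ z 1 2 * h312
    + ρ z * σ z 0 2 * h320 + ρ z * σ z 1 2 * h321 + ρ z * (-σ z 0 0 - σ z 1 1) * h322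
    + ρ z * τ z * h4
    + hct + u z 0 * hc0 + u z 1 * hc1 + u z 2 * hc2
    + ρ z * HEt + ρ z * HF0 + ρ z * HF1 + ρ z * HF2
end
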